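/- Under random uniform binning of X^n into M = ⌈exp(nR)⌉ bins, independently of a memoryless source pair (X,Y) ~ P_{XY}^n, the probability that there exists a sequence x̃ ≠ X in the same bin as X with empirical conditional entropy Ĥ(x̃|Y) ≤ γ is at most (n+1)^{|X||Y|} exp(−n(R − γ)). -/
import Mathlib


open Finset
open scoped Classical

/-- Empirical distribution (type) of a sequence. -/
noncomputable def empDist {Y : Type*} [DecidableEq Y] {n : ℕ} (y : Fin n → Y) (b : Y) : ℝ :=
  ((Finset.univ.filter fun i => y i = b).card : ℝ) / n

/-- Empirical joint distribution (joint type). -/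
noncomputable def empJoint {X Y : Type*} [DecidableEq X] [DecidableEq Y] {n : ℕ}
    (x : Fin n → X) (y : Fin n → Y) (ab : X × Y) : ℝ :=
  ((Finset.univ.filter fun i => x i = ab.1 ∧ y i = ab.2).card : ℝ) / n

/-- Shannon entropy, base 2. -/
noncomputable def ent2 {Z : Type*} [Fintype Z] (p : Z → ℝ) : ℝ :=
  ∑ z, -(p z * Real.logb 2 (p z))

/-- Empirical conditional entropy `Ĥ(x|y) = H(joint type) − H(type of y)`. -/
noncomputable def empCondEnt {X Y : Type*} [Fintype X] [Fintype Y]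
    [DecidableEq X] [DecidableEq Y] {n : ℕ} (x : Fin n → X) (y : Fin n → Y) : ℝ :=
  ent2 (empJoint x y) - ent2 (empDist y)

section Stmt9Aux

set_option linter.unusedSectionVars false

variable {X Y : Type*} [Fintype X] [Fintype Y] [DecidableEq X] [DecidableEq Y] {n : ℕ}

noncomputable def cnt (x : Fin n → X) (y : Fin n → Y) (ab : X × Y) : ℕ :=
  (Finset.univ.filter fun i => x i = ab.1 ∧ y i = ab.2).card

noncomputable def cntY (y : Fin n → Y) (b : Y) : ℕ :=
  (Finset.univ.filter fun i => y i = b).card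

lemma empJoint_eq (x : Fin n → X) (y : Fin n → Y) (ab : X × Y) :
    empJoint x y ab = (cnt x y ab : ℝ) / n := rfl

lemma empDist_eq (y : Fin n → Y) (b : Y) : empDist y b = (cntY y b : ℝ) / n := rfl

lemma sum_cnt (x : Fin n → X) (y : Fin n → Y) (b : Y) :
    ∑ a, cnt x y (a, b) = cntY y b := by
  rw [cntY, Finset.card_eq_sum_card_fiberwise (f := fun i => x i) (t := univ)
    (fun i _ => mem_univ _)]
  refine Finset.sum_congr rfl fun a _ => ?_
  rw [cnt, Finset.filter_filter]
  congr 1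
  ext i
  simp only [Finset.mem_filter]
  tauto

lemma cnt_le_cntY (x : Fin n → X) (y : Fin n → Y) (ab : X × Y) :
    cnt x y ab ≤ cntY y ab.2 := by
  apply Finset.card_le_card
  intro i hi
  simp only [Finset.mem_filter] at *
  tauto

lemma prod_comp_cnt (V : X × Y → ℝ) (x' : Fin n → X) (y : Fin n → Y) :
    ∏ i, V (x' i, y i) = ∏ ab, V ab ^ cnt x' y ab := by
  have hc : ∀ ab : X × Y, (univ.filter fun i => (x' i, y i) = ab).card = cnt x' y ab := by
    intro ab
    rw [cnt]
    congr 1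
    ext i
    simp [Prod.ext_iff]
  rw [Finset.prod_comp V (fun i => (x' i, y i)),
    Finset.prod_subset (Finset.subset_univ ((univ : Finset (Fin n)).image fun i => (x' i, y i)))
      (fun ab _ hab => ?_)]
  · exact Finset.prod_congr rfl fun ab _ => by rw [hc]
  · have h0 : (univ.filter fun i => (x' i, y i) = ab).card = 0 := by
      rw [Finset.card_eq_zero, Finset.filter_eq_empty_iff]
      intro i _ h
      exact hab (Finset.mem_image.mpr ⟨i, mem_univ i, h⟩)
    rw [h0, pow_zero]

lemma log_const (hn : 0 < n) (y : Fin n → Y) (x₀ : Fin n → X) :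
    ∑ ab : X × Y, (if cnt x₀ y ab = 0 then (0:ℝ)
        else (cnt x₀ y ab : ℝ) * Real.logb 2 ((cnt x₀ y ab : ℝ) / (cntY y ab.2 : ℝ)))
      = -((n:ℝ) * empCondEnt x₀ y) := by
  have hn' : (n : ℝ) ≠ 0 := Nat.cast_ne_zero.mpr hn.ne'
  have hJ : (n:ℝ) * ent2 (empJoint x₀ y)
      = ∑ ab : X × Y, -((cnt x₀ y ab : ℝ) * Real.logb 2 ((cnt x₀ y ab : ℝ) / n)) := by
    rw [ent2, Finset.mul_sum]
    refine Finset.sum_congr rfl fun ab _ => ?_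
    rw [empJoint_eq]
    field_simp
  have hY : (n:ℝ) * ent2 (empDist y)
      = ∑ ab : X × Y, -((cnt x₀ y ab : ℝ) * Real.logb 2 ((cntY y ab.2 : ℝ) / n)) := by
    rw [ent2, Finset.mul_sum, Fintype.sum_prod_type_right]
    refine Finset.sum_congr rfl fun b _ => ?_
    rw [empDist_eq]
    have : ∑ a : X, -((cnt x₀ y (a, b) : ℝ) * Real.logb 2 ((cntY y b : ℝ) / n))
        = -((cntY y b : ℝ) * Real.logb 2 ((cntY y b : ℝ) / n)) := by
      rw [Finset.sum_neg_distrib, ← Finset.sum_mul]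
      congr 2
      rw [← Nat.cast_sum]
      exact_mod_cast congrArg (Nat.cast (R := ℝ)) (sum_cnt x₀ y b)
    rw [this]
    field_simp
  have key : -((n:ℝ) * empCondEnt x₀ y)
      = ∑ ab : X × Y, ((cnt x₀ y ab : ℝ) * Real.logb 2 ((cnt x₀ y ab : ℝ) / n)
          - (cnt x₀ y ab : ℝ) * Real.logb 2 ((cntY y ab.2 : ℝ) / n)) := by
    rw [empCondEnt, mul_sub, neg_sub, hJ, hY, ← Finset.sum_sub_distrib]
    refine Finset.sum_congr rfl fun ab _ => ?_
    ring
  rw [key]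
  refine Finset.sum_congr rfl fun ab _ => ?_
  by_cases h : cnt x₀ y ab = 0
  · simp [h]
  · have hN : 0 < cnt x₀ y ab := Nat.pos_of_ne_zero h
    have hcy : 0 < cntY y ab.2 := lt_of_lt_of_le hN (cnt_le_cntY x₀ y ab)
    have hN' : (cnt x₀ y ab : ℝ) ≠ 0 := Nat.cast_ne_zero.mpr h
    have hcy' : (cntY y ab.2 : ℝ) ≠ 0 := Nat.cast_ne_zero.mpr hcy.ne'
    rw [if_neg h, ← mul_sub, ← Real.logb_div (div_ne_zero hN' hn') (div_ne_zero hcy' hn')]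
    congr 2
    field_simp

lemma classCard (hn : 0 < n) (y : Fin n → Y) (x₀ : Fin n → X) :
    ((univ.filter fun x' : Fin n → X => cnt x' y = cnt x₀ y).card : ℝ)
      ≤ (2:ℝ) ^ ((n:ℝ) * empCondEnt x₀ y) := by
  classical
  set N : X × Y → ℕ := cnt x₀ y with hN
  set V : X × Y → ℝ := fun ab => (N ab : ℝ) / (cntY y ab.2 : ℝ) with hVdef
  have hV0 : ∀ ab, 0 ≤ V ab := fun ab => div_nonneg (by positivity) (by positivity)
  have htot : ∑ x' : Fin n → X, ∏ i, V (x' i, y i) = 1 := by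
    rw [show (∑ x' : Fin n → X, ∏ i, V (x' i, y i))
        = ∑ x' : Fin n → X, ∏ i, (fun i a => V (a, y i)) i (x' i) from rfl,
      ← Fintype.prod_sum (fun i a => V (a, y i))]
    refine Finset.prod_eq_one fun i _ => ?_
    have hcy : 0 < cntY y (y i) := by
      rw [cntY]
      exact Finset.card_pos.mpr ⟨i, by simp⟩
    have hcy' : (cntY y (y i) : ℝ) ≠ 0 := Nat.cast_ne_zero.mpr hcy.ne'
    have : ∑ a : X, V (a, y i) = (∑ a : X, (N (a, y i) : ℝ)) / (cntY y (y i) : ℝ) := by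
      rw [Finset.sum_div]
    rw [this, ← Nat.cast_sum, hN, sum_cnt x₀ y (y i), div_self hcy']
  set c : ℝ := ∏ ab, V ab ^ N ab with hc
  have hcard : ((univ.filter fun x' : Fin n → X => cnt x' y = N).card : ℝ) * c ≤ 1 := by
    have h1 : ∑ x' ∈ univ.filter (fun x' : Fin n → X => cnt x' y = N), ∏ i, V (x' i, y i)
        = ((univ.filter fun x' : Fin n → X => cnt x' y = N).card : ℝ) * c := by
      rw [Finset.sum_congr rfl (fun x' hx' => ?_), Finset.sum_const, nsmul_eq_mul]
      rw [prod_comp_cnt, (Finset.mem_filter.mp hx').2]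
    rw [← h1, ← htot]
    exact Finset.sum_le_sum_of_subset_of_nonneg (Finset.subset_univ _)
      (fun x' _ _ => Finset.prod_nonneg fun i _ => hV0 _)
  have hcval : c = (2:ℝ) ^ (-((n:ℝ) * empCondEnt x₀ y)) := by
    rw [← log_const hn y x₀, Real.rpow_sum_of_pos (by norm_num : (0:ℝ) < 2), hc]
    refine Finset.prod_congr rfl fun ab _ => ?_
    by_cases h : N ab = 0
    · simp only [← hN, h, if_pos]
      simp [h]
    · have hNpos : 0 < N ab := Nat.pos_of_ne_zero h
      have hcy : 0 < cntY y ab.2 := lt_of_lt_of_le hNpos (cnt_le_cntY x₀ y ab)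
      have hVpos : 0 < V ab := div_pos (by exact_mod_cast hNpos) (by exact_mod_cast hcy)
      rw [if_neg h, ← Real.rpow_natCast (V ab) (N ab),
        ← Real.rpow_logb (b := 2) (by norm_num) (by norm_num) hVpos,
        ← Real.rpow_mul (by norm_num : (0:ℝ) ≤ 2), mul_comm (Real.logb 2 (V ab))]
  have hcpos : 0 < c := by rw [hcval]; positivity
  have hle : ((univ.filter fun x' : Fin n → X => cnt x' y = N).card : ℝ) ≤ 1 / c :=
    (le_div_iff₀ hcpos).mpr hcard
  calc ((univ.filter fun x' : Fin n → X => cnt x' y = N).card : ℝ)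
      ≤ 1 / c := hle
    _ = (2:ℝ) ^ ((n:ℝ) * empCondEnt x₀ y) := by
        rw [hcval, Real.rpow_neg (by norm_num : (0:ℝ) ≤ 2), one_div, inv_inv]

lemma cnt_le_n (x : Fin n → X) (y : Fin n → Y) (ab : X × Y) : cnt x y ab ≤ n := by
  calc cnt x y ab ≤ (univ : Finset (Fin n)).card := Finset.card_filter_le _ _
  _ = n := by simp

lemma countCondEnt (hn : 0 < n) (y : Fin n → Y) (γ : ℝ) :
    ((univ.filter fun x' : Fin n → X => empCondEnt x' y ≤ γ).card : ℝ)
      ≤ ((n:ℝ)+1) ^ (Fintype.card X * Fintype.card Y) * (2:ℝ) ^ ((n:ℝ) * γ) := by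
  classical
  set Ty := univ.filter fun x' : Fin n → X => empCondEnt x' y ≤ γ with hTy
  have hfib : Ty.card = ∑ N ∈ Ty.image (fun x' => cnt x' y),
      (Ty.filter fun x' => cnt x' y = N).card :=
    Finset.card_eq_sum_card_fiberwise (fun x hx => mem_image_of_mem _ hx)
  have hfiber : ∀ N ∈ Ty.image (fun x' => cnt x' y),
      ((Ty.filter fun x' => cnt x' y = N).card : ℝ) ≤ (2:ℝ) ^ ((n:ℝ)*γ) := by
    intro N hNmem
    obtain ⟨x₀, hx₀Ty, hx₀⟩ := mem_image.mp hNmem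
    have hHle : empCondEnt x₀ y ≤ γ := (mem_filter.mp hx₀Ty).2
    calc ((Ty.filter fun x' => cnt x' y = N).card : ℝ)
        ≤ ((univ.filter fun x' : Fin n → X => cnt x' y = cnt x₀ y).card : ℝ) := by
          have : (Ty.filter fun x' => cnt x' y = N)
              ⊆ univ.filter fun x' : Fin n → X => cnt x' y = cnt x₀ y := by
            intro x' hx'
            simp only [mem_filter, mem_univ, true_and] at *
            rw [hx'.2, hx₀]
          exact_mod_cast Finset.card_le_card this
      _ ≤ (2:ℝ) ^ ((n:ℝ) * empCondEnt x₀ y) := classCard hn y x₀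
      _ ≤ (2:ℝ) ^ ((n:ℝ) * γ) := by
          apply Real.rpow_le_rpow_of_exponent_le (by norm_num)
          exact mul_le_mul_of_nonneg_left hHle (by positivity)
  have himg : ((Ty.image fun x' => cnt x' y).card : ℝ)
      ≤ ((n:ℝ)+1) ^ (Fintype.card X * Fintype.card Y) := by
    have hinj : (Ty.image fun x' => cnt x' y).card ≤ Fintype.card (X × Y → Fin (n+1)) := by
      rw [← Finset.card_univ]
      apply Finset.card_le_card_of_injOn
        (f := fun N ab => (⟨min (N ab) n, by omega⟩ : Fin (n+1))) (fun _ _ => mem_univ _)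
      intro N1 h1 N2 h2 heq
      have hb : ∀ N ∈ Ty.image (fun x' : Fin n → X => cnt x' y), ∀ ab, N ab ≤ n := by
        intro N hN ab
        obtain ⟨x', _, rfl⟩ := mem_image.mp hN
        exact cnt_le_n x' y ab
      funext ab
      have h' := congrFun heq ab
      have h1' := hb N1 h1 ab
      have h2' := hb N2 h2 ab
      simp only [Fin.mk.injEq] at h'
      omega
    calc ((Ty.image fun x' => cnt x' y).card : ℝ)
        ≤ (Fintype.card (X × Y → Fin (n+1)) : ℝ) := by exact_mod_cast hinj
      _ = ((n:ℝ)+1) ^ (Fintype.card X * Fintype.card Y) := by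
          rw [Fintype.card_fun]
          push_cast
          simp [Fintype.card_prod]
  calc ((univ.filter fun x' : Fin n → X => empCondEnt x' y ≤ γ).card : ℝ)
      = ∑ N ∈ Ty.image (fun x' => cnt x' y), ((Ty.filter fun x' => cnt x' y = N).card : ℝ) := by
        rw [← hTy]; exact_mod_cast hfib
    _ ≤ ∑ _N ∈ Ty.image (fun x' => cnt x' y), (2:ℝ) ^ ((n:ℝ)*γ) := Finset.sum_le_sum hfiber
    _ = ((Ty.image fun x' => cnt x' y).card : ℝ) * (2:ℝ) ^ ((n:ℝ)*γ) := by
        rw [Finset.sum_const, nsmul_eq_mul]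
    _ ≤ ((n:ℝ)+1) ^ (Fintype.card X * Fintype.card Y) * (2:ℝ) ^ ((n:ℝ)*γ) := by
        apply mul_le_mul_of_nonneg_right himg (by positivity)

lemma binCount {A : Type*} [Fintype A] [DecidableEq A] {M : ℕ} {xt x : A} (hne : xt ≠ x) :
    (univ.filter fun b : A → Fin M => b xt = b x).card * M = M ^ Fintype.card A := by
  classical
  have e : Fin M × {b : A → Fin M // b xt = b x} ≃ (A → Fin M) :=
    { toFun := fun p => Function.update p.2.1 xt p.1
      invFun := fun f => (f xt, ⟨Function.update f xt (f x), by
        rw [Function.update_self, Function.update_of_ne (Ne.symm hne)]⟩)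
      left_inv := by
        rintro ⟨m, b, hb⟩
        refine Prod.ext ?_ (Subtype.ext ?_)
        · simp
        · show Function.update (Function.update b xt m) xt (Function.update b xt m x) = b
          rw [Function.update_of_ne (Ne.symm hne), Function.update_idem, ← hb,
            Function.update_eq_self]
      right_inv := by
        intro f
        show Function.update (Function.update f xt (f x)) xt (f xt) = f
        rw [Function.update_idem, Function.update_eq_self]
    }
  have := Fintype.card_congr e
  rw [Fintype.card_prod, Fintype.card_fin, Fintype.card_fun, Fintype.card_fin] at this
  rw [← this, Fintype.card_subtype, mul_comm]

lemma sum_prod_PXY (PXY : X × Y → ℝ) (hP1 : ∑ a, PXY a = 1) :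
    ∑ x : Fin n → X, ∑ y : Fin n → Y, ∏ i, PXY (x i, y i) = 1 := by
  classical
  have hS : ∑ a : X, ∑ b : Y, PXY (a, b) = 1 := by rw [← Fintype.sum_prod_type]; exact hP1
  have h1 : ∀ x : Fin n → X, ∑ y : Fin n → Y, ∏ i, PXY (x i, y i)
      = ∏ i, ∑ b, PXY (x i, b) := by
    intro x
    rw [show (∑ y : Fin n → Y, ∏ i, PXY (x i, y i))
        = ∑ y : Fin n → Y, ∏ i, (fun i b => PXY (x i, b)) i (y i) from rfl,
      ← Fintype.prod_sum (fun i b => PXY (x i, b))]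
  calc ∑ x : Fin n → X, ∑ y : Fin n → Y, ∏ i, PXY (x i, y i)
      = ∑ x : Fin n → X, ∏ i, (fun _ a => ∑ b, PXY (a, b)) i (x i) :=
        Finset.sum_congr rfl (fun x _ => h1 x)
    _ = ∏ _i : Fin n, ∑ a : X, ∑ b : Y, PXY (a, b) := by rw [← Fintype.prod_sum (fun _ a => ∑ b, PXY (a, b))]
    _ = 1 := by simp [hS]

end Stmt9Aux

set_option linter.unusedVariables false in
/-- under uniform independent binning of `X^n` into `M = ⌈2^{nR}⌉` bins,
independently of `(X,Y) ~ P_{XY}^n`, the probability that some `x̃ ≠ X` in the bin of `X`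
has `Ĥ(x̃|Y) ≤ γ` is at most `(n+1)^{|X||Y|} · 2^{−n(R−γ)}`. -/
theorem stmt9 {X Y : Type*} [Fintype X] [Fintype Y] [DecidableEq X] [DecidableEq Y]
    (n : ℕ) (hn : 0 < n) (R γ : ℝ) (hR : 0 < R)
    (PXY : X × Y → ℝ) (hP0 : ∀ a, 0 ≤ PXY a) (hP1 : ∑ a, PXY a = 1)
    (M : ℕ) (hM : M = ⌈(2 : ℝ) ^ ((n : ℝ) * R)⌉₊) :
    ∑ b : (Fin n → X) → Fin M, ∑ x : Fin n → X, ∑ y : Fin n → Y,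
        (1 / ((M : ℝ) ^ Fintype.card (Fin n → X))) * (∏ i, PXY (x i, y i)) *
          (if ∃ xt : Fin n → X, xt ≠ x ∧ b xt = b x ∧ empCondEnt xt y ≤ γ then 1 else 0)
      ≤ ((n : ℝ) + 1) ^ (Fintype.card X * Fintype.card Y) *
          (2 : ℝ) ^ (-(n : ℝ) * (R - γ)) := by
  classical
  have hM1 : 0 < M := by
    rw [hM]; exact Nat.ceil_pos.mpr (Real.rpow_pos_of_pos two_pos _)
  have hMpos : (0:ℝ) < M := Nat.cast_pos.mpr hM1
  have hMR : (2:ℝ) ^ ((n:ℝ)*R) ≤ (M:ℝ) := by rw [hM]; exact Nat.le_ceil _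
  have hMK : (0:ℝ) < (M:ℝ) ^ Fintype.card (Fin n → X) := pow_pos hMpos _
  set Bnd : ℝ := ((n:ℝ)+1) ^ (Fintype.card X * Fintype.card Y) * (2:ℝ) ^ ((n:ℝ)*γ) with hB
  have hBnd0 : (0:ℝ) ≤ Bnd := by positivity
  have hstep : ∀ (x : Fin n → X) (y : Fin n → Y),
      (∑ b : (Fin n → X) → Fin M,
        (if ∃ xt : Fin n → X, xt ≠ x ∧ b xt = b x ∧ empCondEnt xt y ≤ γ then (1:ℝ) else 0))
        ≤ Bnd * ((M:ℝ) ^ Fintype.card (Fin n → X) / M) := by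
    intro x y
    set S : Finset (Fin n → X) :=
      univ.filter (fun xt => xt ≠ x ∧ empCondEnt xt y ≤ γ) with hS
    have hpt : ∀ b : (Fin n → X) → Fin M,
        (if ∃ xt : Fin n → X, xt ≠ x ∧ b xt = b x ∧ empCondEnt xt y ≤ γ then (1:ℝ) else 0)
          ≤ ∑ xt ∈ S, (if b xt = b x then (1:ℝ) else 0) := by
      intro b
      by_cases h : ∃ xt : Fin n → X, xt ≠ x ∧ b xt = b x ∧ empCondEnt xt y ≤ γ
      · obtain ⟨xt, h1, h2, h3⟩ := h
        rw [if_pos ⟨xt, h1, h2, h3⟩]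
        have hmem : xt ∈ S := mem_filter.mpr ⟨mem_univ _, h1, h3⟩
        calc (1:ℝ) = (if b xt = b x then (1:ℝ) else 0) := by rw [if_pos h2]
          _ ≤ ∑ xt ∈ S, (if b xt = b x then (1:ℝ) else 0) :=
            Finset.single_le_sum (f := fun xt => if b xt = b x then (1:ℝ) else 0)
              (fun i _ => by positivity) hmem
      · rw [if_neg h]
        exact Finset.sum_nonneg fun i _ => by positivity
    calc ∑ b : (Fin n → X) → Fin M,
          (if ∃ xt : Fin n → X, xt ≠ x ∧ b xt = b x ∧ empCondEnt xt y ≤ γ then (1:ℝ) else 0)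
        ≤ ∑ b : (Fin n → X) → Fin M, ∑ xt ∈ S, (if b xt = b x then (1:ℝ) else 0) :=
          Finset.sum_le_sum fun b _ => hpt b
      _ = ∑ xt ∈ S, ∑ b : (Fin n → X) → Fin M, (if b xt = b x then (1:ℝ) else 0) :=
          Finset.sum_comm
      _ = ∑ xt ∈ S, (((univ.filter fun b : (Fin n → X) → Fin M => b xt = b x).card : ℕ) : ℝ) := by
          refine Finset.sum_congr rfl fun xt _ => ?_
          rw [Finset.sum_boole]
      _ = ∑ _xt ∈ S, ((M:ℝ) ^ Fintype.card (Fin n → X) / M) := by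
          refine Finset.sum_congr rfl fun xt hxt => ?_
          have hne : xt ≠ x := (mem_filter.mp hxt).2.1
          have hb := binCount (M := M) hne
          have hb' : ((univ.filter fun b : (Fin n → X) → Fin M => b xt = b x).card : ℝ) * M
              = (M:ℝ) ^ Fintype.card (Fin n → X) := by exact_mod_cast hb
          rw [eq_div_iff hMpos.ne']
          exact hb'
      _ = (S.card : ℝ) * ((M:ℝ) ^ Fintype.card (Fin n → X) / M) := by
          rw [Finset.sum_const, nsmul_eq_mul]
      _ ≤ Bnd * ((M:ℝ) ^ Fintype.card (Fin n → X) / M) := by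
          refine mul_le_mul_of_nonneg_right ?_ (by positivity)
          calc (S.card : ℝ)
              ≤ ((univ.filter fun xt : Fin n → X => empCondEnt xt y ≤ γ).card : ℝ) := by
                have : S ⊆ univ.filter fun xt : Fin n → X => empCondEnt xt y ≤ γ := fun z hz =>
                  mem_filter.mpr ⟨mem_univ _, (mem_filter.mp hz).2.2⟩
                exact_mod_cast Finset.card_le_card this
            _ ≤ Bnd := countCondEnt hn y γ
  have hrearr : (∑ b : (Fin n → X) → Fin M, ∑ x : Fin n → X, ∑ y : Fin n → Y,
        (1 / ((M : ℝ) ^ Fintype.card (Fin n → X))) * (∏ i, PXY (x i, y i)) *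
          (if ∃ xt : Fin n → X, xt ≠ x ∧ b xt = b x ∧ empCondEnt xt y ≤ γ then 1 else 0))
      = ∑ x : Fin n → X, ∑ y : Fin n → Y,
        (1 / ((M : ℝ) ^ Fintype.card (Fin n → X))) * (∏ i, PXY (x i, y i)) *
          (∑ b : (Fin n → X) → Fin M,
            (if ∃ xt : Fin n → X, xt ≠ x ∧ b xt = b x ∧ empCondEnt xt y ≤ γ then (1:ℝ) else 0)) := by
    rw [Finset.sum_comm]
    refine Finset.sum_congr rfl fun x _ => ?_
    rw [Finset.sum_comm]
    refine Finset.sum_congr rfl fun y _ => ?_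
    rw [← Finset.mul_sum]
  rw [hrearr]
  calc ∑ x : Fin n → X, ∑ y : Fin n → Y,
        (1 / ((M : ℝ) ^ Fintype.card (Fin n → X))) * (∏ i, PXY (x i, y i)) *
          (∑ b : (Fin n → X) → Fin M,
            (if ∃ xt : Fin n → X, xt ≠ x ∧ b xt = b x ∧ empCondEnt xt y ≤ γ then (1:ℝ) else 0))
      ≤ ∑ x : Fin n → X, ∑ y : Fin n → Y, (∏ i, PXY (x i, y i)) * (Bnd / M) := by
        refine Finset.sum_le_sum fun x _ => Finset.sum_le_sum fun y _ => ?_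
        have hw : 0 ≤ ∏ i, PXY (x i, y i) := Finset.prod_nonneg fun i _ => hP0 _
        calc (1 / ((M : ℝ) ^ Fintype.card (Fin n → X))) * (∏ i, PXY (x i, y i)) *
              (∑ b : (Fin n → X) → Fin M,
                (if ∃ xt : Fin n → X, xt ≠ x ∧ b xt = b x ∧ empCondEnt xt y ≤ γ then (1:ℝ) else 0))
            ≤ (1 / ((M : ℝ) ^ Fintype.card (Fin n → X))) * (∏ i, PXY (x i, y i)) *
              (Bnd * ((M:ℝ) ^ Fintype.card (Fin n → X) / M)) := by
              refine mul_le_mul_of_nonneg_left (hstep x y) ?_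
              have h1 : (0:ℝ) ≤ 1 / ((M : ℝ) ^ Fintype.card (Fin n → X)) := by positivity
              exact mul_nonneg h1 hw
          _ = (∏ i, PXY (x i, y i)) * (Bnd / M) := by
              field_simp
    _ = (∑ x : Fin n → X, ∑ y : Fin n → Y, ∏ i, PXY (x i, y i)) * (Bnd / M) := by
        rw [Finset.sum_mul]
        refine Finset.sum_congr rfl fun x _ => ?_
        rw [Finset.sum_mul]
    _ = Bnd / M := by rw [sum_prod_PXY PXY hP1, one_mul]
    _ ≤ Bnd * (2:ℝ) ^ (-((n:ℝ)*R)) := by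
        rw [div_eq_mul_inv]
        refine mul_le_mul_of_nonneg_left ?_ hBnd0
        rw [Real.rpow_neg (by norm_num : (0:ℝ) ≤ 2)]
        exact inv_anti₀ (Real.rpow_pos_of_pos two_pos _) hMR
    _ = ((n : ℝ) + 1) ^ (Fintype.card X * Fintype.card Y) * (2 : ℝ) ^ (-(n : ℝ) * (R - γ)) := by
        rw [hB, mul_assoc, ← Real.rpow_add two_pos]
        congr 2
        ring
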